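/- Let G be a torsion-free abelian group, φ : G → G an endomorphism, and let φ̃ = id_ℚ ⊗ φ be the induced endomorphism of the divisible hull D(G) = ℚ ⊗_ℤ G (into which G embeds via x ↦ 1 ⊗ x). Then h_alg(φ) = h_alg(φ̃). -/

import Mathlib

open scoped Pointwise ENNReal TensorProduct

/-- The `n`-th trajectory of a finite subset `F` under `φ` in an additive group
(`TnAdd φ F n = T_{n+1}(φ,F) = F + φ(F) + … + φⁿ(F)`, a pointwise sum of finsets). -/
noncomputable def TnAdd {G : Type*} [AddGroup G] (φ : G → G) (F : Finset G) :
    ℕ → Finset G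
  | 0 => F
  | n + 1 =>
      letI := Classical.decEq G
      TnAdd φ F n + F.image φ^[n + 1]

/-- `H_alg(φ,F) = lim_n (log |T_n(φ,F)|)/n` (the limit exists, and equals the `limsup`). -/
noncomputable def HalgAdd {G : Type*} [AddGroup G] (φ : G → G) (F : Finset G) : ℝ :=
  Filter.limsup (fun n : ℕ => Real.log (TnAdd φ F n).card / ((n : ℝ) + 1)) Filter.atTop

/-- The algebraic entropy `h_alg(φ) = sup {H_alg(φ,F) : F nonempty finite} ∈ [0,∞]`. -/
noncomputable def halgAdd {G : Type*} [AddGroup G] (φ : G → G) : ℝ≥0∞ :=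
  ⨆ F : Finset G, ⨆ _ : F.Nonempty, ENNReal.ofReal (HalgAdd φ F)

/-- Trajectories commute with images under an intertwining additive homomorphism. -/
lemma TnAdd_image {A B : Type*} [AddGroup A] [AddGroup B] [instB : DecidableEq B] (ψ : A →+ B)
    {φA : A → A} {φB : B → B} (h : Function.Semiconj ψ φA φB) (F : Finset A) :
    ∀ n, TnAdd φB (F.image ψ) n = (TnAdd φA F n).image ψ := by
  intro n
  induction n with
  | zero => rfl
  | succ n ih =>
      have hcomp : (ψ : A → B) ∘ φA^[n + 1] = φB^[n + 1] ∘ ψ :=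
        (h.iterate_right (n + 1)).comp_eq
      simp only [TnAdd]
      rw [Subsingleton.elim (Classical.decEq B) instB]
      letI := Classical.decEq A
      rw [Finset.image_add, ih, Finset.image_image, ← hcomp, ← Finset.image_image]

/-- Entropy with respect to `F` is preserved by injective intertwiners. -/
lemma HalgAdd_image {A B : Type*} [AddGroup A] [AddGroup B] [DecidableEq B] (ψ : A →+ B)
    (hinj : Function.Injective ψ) {φA : A → A} {φB : B → B}
    (h : Function.Semiconj ψ φA φB) (F : Finset A) :
    HalgAdd φB (F.image ψ) = HalgAdd φA F := by
  unfold HalgAdd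
  congr 1
  funext n
  rw [TnAdd_image ψ h F n, Finset.card_image_of_injective _ hinj]

/-- For a torsion-free abelian group `G`, an endomorphism `φ : G → G`,
and the induced endomorphism `φ̃ = id_ℚ ⊗ φ` of the divisible hull `D(G) = ℚ ⊗_ℤ G`,
one has `h_alg(φ) = h_alg(φ̃)`. -/
theorem statement_16 {G : Type*} [AddCommGroup G]
    (htf : ∀ (k : ℕ) (x : G), k ≠ 0 → k • x = 0 → x = 0)
    (φ : G →+ G) :
    halgAdd ⇑φ = halgAdd ⇑(LinearMap.lTensor (R := ℤ) ℚ φ.toIntLinearMap) := by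
  classical
  set D := ℚ ⊗[ℤ] G with hD
  set Φ : D →ₗ[ℤ] D := LinearMap.lTensor (R := ℤ) ℚ φ.toIntLinearMap with hΦ
  set f : G →ₗ[ℤ] D := (TensorProduct.mk ℤ ℚ G) 1 with hf
  have hloc : IsLocalizedModule (nonZeroDivisors ℤ) f :=
    (isLocalizedModule_iff_isBaseChange (nonZeroDivisors ℤ) ℚ f).mpr
      (TensorProduct.isBaseChange ℤ G ℚ)
  -- injectivity of f
  have hfinj : Function.Injective f := by
    rw [injective_iff_map_eq_zero]
    intro x hx
    obtain ⟨s, hs⟩ := (IsLocalizedModule.eq_zero_iff (nonZeroDivisors ℤ) f).mp hx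
    have hs0 : (s : ℤ) ≠ 0 := nonZeroDivisors.coe_ne_zero s
    have h1 : (s : ℤ) • x = 0 := hs
    have h3 : (s : ℤ).natAbs • x = 0 := by
      rw [← natCast_zsmul]
      rcases Int.natAbs_eq (s : ℤ) with he | he
      · rw [← he]; exact h1
      · have h2 : (-(s : ℤ)) • x = 0 := by rw [neg_smul, h1, neg_zero]
        have he' : -(s : ℤ) = ((s : ℤ).natAbs : ℤ) := by omega
        rwa [he'] at h2
    exact htf _ x (Int.natAbs_ne_zero.mpr hs0) h3
  -- intertwining
  have hsemi : Function.Semiconj f ⇑φ ⇑Φ := by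
    intro x
    show (TensorProduct.mk ℤ ℚ G) 1 (φ x) = Φ ((1 : ℚ) ⊗ₜ[ℤ] x)
    rw [hΦ]
    exact (LinearMap.lTensor_tmul (R := ℤ) ℚ φ.toIntLinearMap (1 : ℚ) x).symm
  -- scalar multiplications on D are injective intertwiners
  have hsmul_inj : ∀ s : ℤ, s ≠ 0 → Function.Injective (fun t : D => s • t) := by
    intro s hs a b hab
    have h1 : ((s : ℚ)) • a = ((s : ℚ)) • b := by
      rw [Int.cast_smul_eq_zsmul, Int.cast_smul_eq_zsmul]; exact hab
    have hq : (s : ℚ) ≠ 0 := Int.cast_ne_zero.mpr hs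
    calc a = (s : ℚ)⁻¹ • ((s : ℚ) • a) := (inv_smul_smul₀ hq a).symm
    _ = (s : ℚ)⁻¹ • ((s : ℚ) • b) := by rw [h1]
    _ = b := inv_smul_smul₀ hq b
  have hsmul_semi : ∀ s : ℤ, Function.Semiconj (fun t : D => s • t) ⇑Φ ⇑Φ := fun s t =>
    (map_zsmul Φ s t).symm
  -- common denominators for finite subsets of D
  have hdenom : ∀ F : Finset D, ∃ s : ℤ, s ≠ 0 ∧
      ∃ F' : Finset G, F'.image f = F.image (fun t => s • t) := by
    intro F
    induction F using Finset.induction with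
    | empty => exact ⟨1, one_ne_zero, ∅, by simp⟩
    | @insert y F _ ih =>
        obtain ⟨s, hs, F', hF'⟩ := ih
        obtain ⟨⟨x, t⟩, hxt⟩ := IsLocalizedModule.surj (nonZeroDivisors ℤ) f y
        have ht : (t : ℤ) ≠ 0 := nonZeroDivisors.coe_ne_zero t
        refine ⟨s * (t : ℤ), mul_ne_zero hs ht,
          insert (s • x) (F'.image (fun g => (t : ℤ) • g)), ?_⟩
        rw [Finset.image_insert, Finset.image_insert]
        congr 1
        · have hty : ((t : ℤ)) • y = f x := by
            simpa [Submonoid.smul_def] using hxt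
          rw [mul_smul, hty, ← map_smul]
        · rw [Finset.image_image]
          calc F'.image ((f : G → D) ∘ fun g => (t : ℤ) • g)
              = F'.image ((fun d : D => (t : ℤ) • d) ∘ (f : G → D)) := by
                apply Finset.image_congr; intro g _
                simp only [Function.comp_apply, map_smul]
            _ = (F'.image f).image (fun d : D => (t : ℤ) • d) := by
                rw [Finset.image_image]
            _ = (F.image (fun u => s • u)).image (fun d : D => (t : ℤ) • d) := by rw [hF']
            _ = F.image ((fun d : D => (t : ℤ) • d) ∘ (fun u => s • u)) := by
                rw [Finset.image_image]
            _ = F.image (fun u => (s * (t : ℤ)) • u) := by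
                apply Finset.image_congr; intro u _
                show (t : ℤ) • s • u = (s * (t : ℤ)) • u
                rw [mul_smul]
                exact smul_comm _ _ _
  -- now prove the two inequalities
  apply le_antisymm
  · apply iSup₂_le
    intro F hF
    have h1 : HalgAdd (⇑Φ) (F.image f.toAddMonoidHom) = HalgAdd (⇑φ) F :=
      HalgAdd_image f.toAddMonoidHom hfinj hsemi F
    calc ENNReal.ofReal (HalgAdd (⇑φ) F)
        = ENNReal.ofReal (HalgAdd (⇑Φ) (F.image f.toAddMonoidHom)) := by rw [h1]
      _ ≤ halgAdd (⇑Φ) := le_iSup₂ (f := fun (S : Finset D) (_ : S.Nonempty) =>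
            ENNReal.ofReal (HalgAdd (⇑Φ) S)) (F.image f.toAddMonoidHom) (hF.image _)
  · apply iSup₂_le
    intro F hF
    obtain ⟨s, hs, F', hF'⟩ := hdenom F
    have h1 : HalgAdd (⇑Φ) (F.image (fun t => s • t)) = HalgAdd (⇑Φ) F :=
      HalgAdd_image (DistribMulAction.toAddMonoidHom D s) (hsmul_inj s hs) (hsmul_semi s) F
    have h2 : HalgAdd (⇑Φ) (F'.image f.toAddMonoidHom) = HalgAdd (⇑φ) F' :=
      HalgAdd_image f.toAddMonoidHom hfinj hsemi F'
    have hF'im : (F'.image (f.toAddMonoidHom) : Finset D) = F.image (fun t => s • t) := hF'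
    have hF'ne : F'.Nonempty := by
      by_contra hne
      rw [Finset.not_nonempty_iff_eq_empty] at hne
      have h4 := hF'im
      rw [hne] at h4
      simp only [Finset.image_empty] at h4
      exact (hF.image (fun t : D => s • t)).ne_empty h4.symm
    calc ENNReal.ofReal (HalgAdd (⇑Φ) F)
        = ENNReal.ofReal (HalgAdd (⇑φ) F') := by rw [← h1, ← hF'im, h2]
      _ ≤ halgAdd (⇑φ) := le_iSup₂ (f := fun (S : Finset G) (_ : S.Nonempty) =>
            ENNReal.ofReal (HalgAdd (⇑φ) S)) F' hF'ne
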